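/- For ω_k, ω_j > 0, h > 0, and in the limit γ → 0⁺, the integral g(ω_k, ω_j) = ∫_{−∞}^{∞} dν / (((ω_k² − ν²)² + (2γνω_k²)²)·((ω_j − ν)² + h²)) satisfies 2γ·g(ω_k, ω_j)/π → (h² + ω_k² + ω_j²) / (ω_k⁴·(h⁴ + 2h²(ω_k² + ω_j²) + (ω_k² − ω_j²)²)). -/

import Mathlib

/-!
With `a = γ ωk²` and `b = √(ωk² - a²)`, the resonance denominator factors as
`((ν - b)² + a²) ((ν + b)² + a²)`, and partial fractions turn `2γ/π` times the integrand into
`ωk⁻⁴` times a sum of two Cauchy densities of scale `a` centred at `±b`, each multiplied by the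
bounded weight `(1 - ν / (2c)) / ((ωj - ν)² + h²)` with `c = ±b`. As `γ → 0⁺` these densities
concentrate at `±ωk` (dominated convergence after rescaling to the standard Cauchy density), so
each weighted integral tends to the value `1 / (2 ((ωj ∓ ωk)² + h²))` of its weight there.
-/

open MeasureTheory Real Filter Topology ProbabilityTheory
open scoped NNReal

theorem integral_cauchyPDFReal_mul_eq (x₀ : ℝ) {γ : ℝ≥0} (hγ : γ ≠ 0) (f : ℝ → ℝ) :
    ∫ x, cauchyPDFReal x₀ γ x * f x = ∫ t, cauchyPDFReal 0 1 t * f (γ * t + x₀) := by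
  have hγ' : (0 : ℝ) < γ := NNReal.coe_pos.2 (pos_iff_ne_zero.2 hγ)
  have hsubst : ∫ t, cauchyPDFReal x₀ γ (γ * t + x₀) * f (γ * t + x₀)
      = (γ : ℝ)⁻¹ * ∫ x, cauchyPDFReal x₀ γ x * f x := by
    rw [Measure.integral_comp_mul_left (fun x => cauchyPDFReal x₀ γ (x + x₀) * f (x + x₀)),
      integral_add_right_eq_self (fun x => cauchyPDFReal x₀ γ x * f x), abs_of_pos (inv_pos.2 hγ'),
      smul_eq_mul]
  have hscale (t : ℝ) : cauchyPDFReal 0 1 t = γ * cauchyPDFReal x₀ γ (γ * t + x₀) := by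
    simp only [cauchyPDFReal_def, NNReal.coe_one]
    field_simp
    ring
  simp_rw [hscale, mul_assoc, integral_const_mul, hsubst]
  field_simp

theorem integrable_cauchyPDFReal_mul (x₀ : ℝ) (γ : ℝ≥0) {f : ℝ → ℝ} {M : ℝ}
    (hf : Measurable f) (hM : ∀ x, |f x| ≤ M) :
    Integrable fun x => cauchyPDFReal x₀ γ x * f x :=
  (integrable_cauchyPDFReal x₀).mul_bdd hf.aestronglyMeasurable (ae_of_all _ hM)

theorem tendsto_integral_cauchyPDFReal_mul {ι : Type*} {l : Filter ι} [l.IsCountablyGenerated]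
    {x₀ : ι → ℝ} {γ : ι → ℝ≥0} {f : ι → ℝ → ℝ} {M L : ℝ} (hγ : ∀ᶠ i in l, γ i ≠ 0)
    (hf : ∀ᶠ i in l, Measurable (f i)) (hM : ∀ᶠ i in l, ∀ x, |f i x| ≤ M)
    (hlim : ∀ t, Tendsto (fun i => f i (γ i * t + x₀ i)) l (𝓝 L)) :
    Tendsto (fun i => ∫ x, cauchyPDFReal (x₀ i) (γ i) x * f i x) l (𝓝 L) := by
  have hL : ∫ t, cauchyPDFReal 0 1 t * L = L := by
    rw [integral_mul_const, integral_cauchyPDFReal_eq_one 0 one_ne_zero, one_mul]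
  rw [← hL]
  refine Tendsto.congr' (hγ.mono fun i hi => (integral_cauchyPDFReal_mul_eq _ hi _).symm) ?_
  refine tendsto_integral_filter_of_dominated_convergence (fun t => cauchyPDFReal 0 1 t * M)
    ?_ ?_ ((integrable_cauchyPDFReal 0).mul_const M) (ae_of_all _ fun t => (hlim t).const_mul _)
  · filter_upwards [hf] with i hfi
    exact ((measurable_cauchyPDFReal 0 1).mul
      (hfi.comp (measurable_const_mul _ |>.add_const _))).aestronglyMeasurable
  · filter_upwards [hM] with i hMi
    refine ae_of_all _ fun t => ?_
    rw [norm_mul, Real.norm_of_nonneg (cauchyPDF_pos 0 one_ne_zero t).le]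
    exact mul_le_mul_of_nonneg_left (hMi _) (cauchyPDF_pos 0 one_ne_zero t).le

theorem abs_div_sq_add_sq_le (m ν : ℝ) {h : ℝ} (hh : 0 < h) :
    |ν| / ((m - ν) ^ 2 + h ^ 2) ≤ 1 / (2 * h) + |m| / h ^ 2 := by
  set Q := (m - ν) ^ 2 + h ^ 2
  have hQ : h ^ 2 ≤ Q := le_add_of_nonneg_left (sq_nonneg _)
  have hdist : |ν - m| ≤ Q / (2 * h) := by
    rw [le_div_iff₀ (by positivity)]
    nlinarith [sq_nonneg (|ν - m| - h), sq_abs (ν - m)]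
  have hm : |m| ≤ |m| * (Q / h ^ 2) :=
    le_mul_of_one_le_right (abs_nonneg m) ((one_le_div (by positivity)).2 hQ)
  rw [div_le_iff₀ (by positivity)]
  calc |ν| ≤ |ν - m| + |m| := by simpa using abs_add_le (ν - m) m
    _ ≤ Q / (2 * h) + |m| * (Q / h ^ 2) := add_le_add hdist hm
    _ = (1 / (2 * h) + |m| / h ^ 2) * Q := by ring

noncomputable def resonanceWeight (m h c ν : ℝ) : ℝ :=
  (1 - ν / (2 * c)) / ((m - ν) ^ 2 + h ^ 2)

@[fun_prop]
theorem measurable_resonanceWeight (m h c : ℝ) : Measurable (resonanceWeight m h c) := by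
  unfold resonanceWeight
  fun_prop

theorem abs_resonanceWeight_le {m h : ℝ} (c ν : ℝ) (hh : 0 < h) :
    |resonanceWeight m h c ν| ≤ 1 / h ^ 2 + (1 / (2 * h) + |m| / h ^ 2) / (2 * |c|) := by
  have hQ : 0 < (m - ν) ^ 2 + h ^ 2 := by positivity
  have hnum : |1 - ν / (2 * c)| ≤ 1 + |ν| / (2 * |c|) := by
    simpa [abs_div, abs_mul] using abs_sub (1 : ℝ) (ν / (2 * c))
  have hinv : 1 / ((m - ν) ^ 2 + h ^ 2) ≤ 1 / h ^ 2 :=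
    one_div_le_one_div_of_le (by positivity) (by nlinarith)
  calc |resonanceWeight m h c ν|
      ≤ (1 + |ν| / (2 * |c|)) / ((m - ν) ^ 2 + h ^ 2) := by
        rw [resonanceWeight, abs_div, abs_of_pos hQ]; gcongr
    _ = 1 / ((m - ν) ^ 2 + h ^ 2) + |ν| / ((m - ν) ^ 2 + h ^ 2) / (2 * |c|) := by ring
    _ ≤ _ := by gcongr; exact abs_div_sq_add_sq_le m ν hh

theorem tendsto_integral_cauchyPDFReal_mul_resonanceWeight {ι : Type*} {l : Filter ι}
    [l.IsCountablyGenerated] {x₀ : ι → ℝ} {γ : ι → ℝ≥0} {c m h : ℝ} (hc : c ≠ 0) (hh : 0 < h)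
    (hγ₀ : ∀ᶠ i in l, γ i ≠ 0) (hγ : Tendsto γ l (𝓝 0)) (hx₀ : Tendsto x₀ l (𝓝 c)) :
    Tendsto (fun i => ∫ ν, cauchyPDFReal (x₀ i) (γ i) ν * resonanceWeight m h (x₀ i) ν)
      l (𝓝 (1 / 2 / ((m - c) ^ 2 + h ^ 2))) := by
  have hx₀_far : ∀ᶠ i in l, |c| ≤ 2 * |x₀ i| := by
    filter_upwards [hx₀.abs.eventually (eventually_gt_nhds (half_lt_self (abs_pos.2 hc)))]
      with i hi
    linarith
  refine tendsto_integral_cauchyPDFReal_mul hγ₀ (.of_forall fun i => by fun_prop)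
    (M := 1 / h ^ 2 + (1 / (2 * h) + |m| / h ^ 2) / |c|) ?_ fun t => ?_
  · filter_upwards [hx₀_far] with i hi ν
    refine (abs_resonanceWeight_le (x₀ i) ν hh).trans ?_
    gcongr
  · have hν : Tendsto (fun i => (γ i : ℝ) * t + x₀ i) l (𝓝 c) := by
      simpa using ((NNReal.tendsto_coe.2 hγ).mul_const t).add hx₀
    have hhalf : 1 - c / (2 * c) = 1 / 2 := by field_simp; norm_num
    rw [← hhalf]
    unfold resonanceWeight
    exact (tendsto_const_nhds.sub (hν.div (hx₀.const_mul 2) (by simpa))).div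
      (((tendsto_const_nhds.sub hν).pow 2).add tendsto_const_nhds) (by positivity)

theorem resonance_partial_fractions {ω m h γ b : ℝ} (a : ℝ≥0) (ν : ℝ) (hω : ω ≠ 0) (hh : h ≠ 0)
    (hγ : γ ≠ 0) (hb : b ≠ 0) (ha : (a : ℝ) = γ * ω ^ 2)
    (hb2 : b ^ 2 = ω ^ 2 - (γ * ω ^ 2) ^ 2) :
    2 * γ * (1 / (((ω ^ 2 - ν ^ 2) ^ 2 + (2 * γ * ν * ω ^ 2) ^ 2) * ((m - ν) ^ 2 + h ^ 2))) / π
      = 1 / ω ^ 4 * (cauchyPDFReal b a ν * resonanceWeight m h b ν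
          + cauchyPDFReal (-b) a ν * resonanceWeight m h (-b) ν) := by
  have hX : (ν - b) ^ 2 + (γ * ω ^ 2) ^ 2 ≠ 0 := by positivity
  have hY : (ν - -b) ^ 2 + (γ * ω ^ 2) ^ 2 ≠ 0 := by positivity
  have hfactor : (ω ^ 2 - ν ^ 2) ^ 2 + (2 * γ * ν * ω ^ 2) ^ 2
      = ((ν - b) ^ 2 + (γ * ω ^ 2) ^ 2) * ((ν - -b) ^ 2 + (γ * ω ^ 2) ^ 2) := by
    linear_combination (2 * ν ^ 2 - b ^ 2 - ω ^ 2 - (γ * ω ^ 2) ^ 2) * hb2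
  rw [hfactor]
  have hQ : (m - ν) ^ 2 + h ^ 2 ≠ 0 := by positivity
  simp only [cauchyPDFReal_def, ha, resonanceWeight]
  field_simp
  linear_combination (-4 * b) * hb2

theorem resonance_integral_eq {ω m h γ b : ℝ} (a : ℝ≥0) (hω : ω ≠ 0) (hh : 0 < h) (hγ : γ ≠ 0)
    (hb : b ≠ 0) (ha : (a : ℝ) = γ * ω ^ 2) (hb2 : b ^ 2 = ω ^ 2 - (γ * ω ^ 2) ^ 2) :
    2 * γ * (∫ ν, 1 / (((ω ^ 2 - ν ^ 2) ^ 2 + (2 * γ * ν * ω ^ 2) ^ 2) * ((m - ν) ^ 2 + h ^ 2))) / π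
      = 1 / ω ^ 4 * ((∫ ν, cauchyPDFReal b a ν * resonanceWeight m h b ν)
          + ∫ ν, cauchyPDFReal (-b) a ν * resonanceWeight m h (-b) ν) := by
  have hint (c : ℝ) : Integrable fun ν => cauchyPDFReal c a ν * resonanceWeight m h c ν :=
    integrable_cauchyPDFReal_mul c a (by fun_prop) (abs_resonanceWeight_le c · hh)
  rw [← integral_add (hint b) (hint (-b)), ← integral_const_mul, ← integral_const_mul,
    ← integral_div]
  exact integral_congr_ae (ae_of_all _ fun ν =>
    resonance_partial_fractions a ν hω hh.ne' hγ hb ha hb2)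

theorem resonance_integral_limit_general
    (ωk ωj h : ℝ) (hωk : 0 < ωk) (hh : 0 < h) :
    Tendsto
      (fun γ : ℝ =>
        2 * γ *
          (∫ ν : ℝ, 1 /
            (((ωk ^ 2 - ν ^ 2) ^ 2 + (2 * γ * ν * ωk ^ 2) ^ 2) *
              ((ωj - ν) ^ 2 + h ^ 2))) / π)
      (nhdsWithin 0 (Set.Ioi 0))
      (nhds ((h ^ 2 + ωk ^ 2 + ωj ^ 2) /
        (ωk ^ 4 * (h ^ 4 + 2 * h ^ 2 * (ωk ^ 2 + ωj ^ 2) + (ωk ^ 2 - ωj ^ 2) ^ 2)))) := by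
  set a : ℝ → ℝ≥0 := fun γ => (γ * ωk ^ 2).toNNReal
  set b : ℝ → ℝ := fun γ => √(ωk ^ 2 - (γ * ωk ^ 2) ^ 2)
  have ha : Tendsto a (𝓝[>] 0) (𝓝 0) := by
    have : Continuous a := by fun_prop
    simpa [a] using (this.tendsto 0).mono_left nhdsWithin_le_nhds
  have hb : Tendsto b (𝓝[>] 0) (𝓝 ωk) := by
    have : Continuous b := by fun_prop
    simpa [b, Real.sqrt_sq hωk.le] using (this.tendsto 0).mono_left nhdsWithin_le_nhds
  have hγ : ∀ᶠ γ in 𝓝[>] (0 : ℝ), 0 < γ := self_mem_nhdsWithin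
  have hb₀ : ∀ᶠ γ in 𝓝[>] 0, 0 < b γ := hb.eventually (eventually_gt_nhds hωk)
  have ha₀ : ∀ᶠ γ in 𝓝[>] 0, a γ ≠ 0 := by
    filter_upwards [hγ] with γ hγ
    exact (Real.toNNReal_pos.2 (by positivity)).ne'
  have hpieces := ((tendsto_integral_cauchyPDFReal_mul_resonanceWeight (m := ωj) hωk.ne' hh ha₀
    ha hb).add (tendsto_integral_cauchyPDFReal_mul_resonanceWeight (m := ωj)
    (neg_ne_zero.2 hωk.ne') hh ha₀ ha hb.neg)).const_mul (1 / ωk ^ 4)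
  have hvalue : 1 / ωk ^ 4 * (1 / 2 / ((ωj - ωk) ^ 2 + h ^ 2) + 1 / 2 / ((ωj - -ωk) ^ 2 + h ^ 2))
      = (h ^ 2 + ωk ^ 2 + ωj ^ 2) /
        (ωk ^ 4 * (h ^ 4 + 2 * h ^ 2 * (ωk ^ 2 + ωj ^ 2) + (ωk ^ 2 - ωj ^ 2) ^ 2)) := by
    field_simp
    ring
  rw [hvalue] at hpieces
  refine hpieces.congr' ?_
  filter_upwards [hγ, hb₀] with γ hγ hbγ
  exact (resonance_integral_eq (a γ) hωk.ne' hh hγ.ne' hbγ.ne'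
    (Real.coe_toNNReal _ (by positivity)) (Real.sq_sqrt (Real.sqrt_pos.1 hbγ).le)).symm

/-- For `ω_k, ω_j > 0`, `h > 0`, in the limit `γ → 0⁺`, the integral
`g(ω_k, ω_j) = ∫ dν / (((ω_k² − ν²)² + (2γνω_k²)²)((ω_j − ν)² + h²))` satisfies
`2γ g(ω_k,ω_j)/π → (h² + ω_k² + ω_j²)/(ω_k⁴ (h⁴ + 2h²(ω_k² + ω_j²) + (ω_k² − ω_j²)²))`. -/
theorem resonance_integral_limit
    (ωk ωj h : ℝ) (hωk : 0 < ωk) (hωj : 0 < ωj) (hh : 0 < h) :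
    Tendsto
      (fun γ : ℝ =>
        2 * γ *
          (∫ ν : ℝ, 1 /
            (((ωk ^ 2 - ν ^ 2) ^ 2 + (2 * γ * ν * ωk ^ 2) ^ 2) *
              ((ωj - ν) ^ 2 + h ^ 2))) / π)
      (nhdsWithin 0 (Set.Ioi 0))
      (nhds ((h ^ 2 + ωk ^ 2 + ωj ^ 2) /
        (ωk ^ 4 * (h ^ 4 + 2 * h ^ 2 * (ωk ^ 2 + ωj ^ 2) + (ωk ^ 2 - ωj ^ 2) ^ 2)))) :=
  resonance_integral_limit_general ωk ωj h hωk hh
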